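/- Let A be a d-regular graph with vertex rotation map φ(a, b̂) giving the b̂-th neighbor of a (b̂ ∈ [d]), and let B be a Cayley graph on [d]^s with the shifted-walk property that for k ≤ s the first coordinates of a k-step shifted walk in B are uniform on [d]^k. Then for all 1 ≤ k ≤ s+1 and every vertex a ∈ A, the k-step s-wide replacement walk started at a (which uses the first coordinates of a shifted B-walk to choose steps in A) is identical in distribution to the ordinary k-step random walk in A started at a. -/
import Mathlib


open Finset

/-- Cyclic shift of the `s` coordinate blocks. -/
def shiftB {s : ℕ} [NeZero s] {G : Type*} (b : Fin s → G) : Fin s → G :=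
  fun i => b (i + 1)

/-- The shifted walk in the inner Cayley graph: `b 1 = b`, `b (i+1) = shift (b i + u i)`. -/
def bSeq {s : ℕ} [NeZero s] {G : Type*} [AddGroup G] (b : Fin s → G) (u : ℕ → Fin s → G) :
    ℕ → Fin s → G
  | 0 => b
  | i + 1 => shiftB (bSeq b u i + u i)

/-- A walk in the outer graph driven by a sequence of directions, via the rotation map φ. -/
def aSeq {V D : Type*} (φ : V → D → V) (a : V) (c : ℕ → D) : ℕ → V
  | 0 => a
  | n + 1 => φ (aSeq φ a c n) (c n)

lemma aSeq_congr {V D : Type*} (φ : V → D → V) (a : V) {c c' : ℕ → D} :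
    ∀ m, (∀ n, n < m → c n = c' n) → aSeq φ a c m = aSeq φ a c' m := by
  intro m
  induction m with
  | zero => intro _; rfl
  | succ m ih =>
      intro h
      simp only [aSeq]
      rw [ih (fun n hn => h n (by omega)), h m (by omega)]

lemma bSeq_congr {s : ℕ} [NeZero s] {G : Type*} [AddGroup G] (b : Fin s → G)
    {u u' : ℕ → Fin s → G} :
    ∀ m, (∀ n, n < m → u n = u' n) → bSeq b u m = bSeq b u' m := by
  intro m
  induction m with
  | zero => intro _; rfl
  | succ m ih =>
      intro h
      simp only [bSeq]
      rw [ih (fun n hn => h n (by omega)), h m (by omega)]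

lemma sum_piFinset_snoc {α : Type*} {n : ℕ} (S : Finset α) (g : (Fin (n + 1) → α) → ℝ) :
    ∑ u ∈ Fintype.piFinset (fun _ : Fin (n + 1) => S), g u
      = ∑ x ∈ S, ∑ u ∈ Fintype.piFinset (fun _ : Fin n => S), g (Fin.snoc u x) := by
  have h := Finset.filter_piFinset_eq_map_snocEquiv (fun _ : Fin (n + 1) => S)
    (fun _ => True)
  simp only [Finset.filter_true] at h
  rw [h, Finset.sum_map, Finset.sum_product]
  rfl

lemma sum_fun_snoc {α : Type*} [Fintype α] {n : ℕ} (g : (Fin (n + 1) → α) → ℝ) :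
    ∑ c : Fin (n + 1) → α, g c = ∑ x : α, ∑ c : Fin n → α, g (Fin.snoc c x) := by
  rw [← (Fin.snocEquiv (fun _ => α)).sum_comp g, Fintype.sum_prod_type]
  rfl

/-- Pseudorandomness of the s-wide replacement product walk: if for every `k ≤ s` the first
coordinate blocks of a `k`-step shifted B-walk are uniform on `D^k`, then for every
`1 ≤ k ≤ s+1` and every start vertex `a`, the `k`-vertex s-wide replacement walk from `a`
is identical in distribution to the ordinary `k`-vertex random walk in the d-regular graph
`A` (whose steps are uniform directions in `D`) started at `a`. -/
theorem stmt8 {V D : Type*} [Fintype V] [Fintype D] [Nonempty D] [AddGroup D]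
    (s : ℕ) [NeZero s]
    (φ : V → D → V) (U : Finset (Fin s → D)) (hU : U.Nonempty)
    (hpseudo : ∀ k : ℕ, k ≤ s → ∀ Fc : (Fin k → D) → ℝ,
      (∑ b : Fin s → D, ∑ u ∈ Fintype.piFinset (fun _ : Fin k => U),
          Fc (fun i => bSeq b (fun j => if h : j < k then u ⟨j, h⟩ else 0) (i : ℕ) 0))
        / ((Fintype.card (Fin s → D) : ℝ) * (U.card : ℝ) ^ k)
      = (∑ v : Fin k → D, Fc v) / (Fintype.card (Fin k → D) : ℝ)) :
    ∀ k : ℕ, (hk1 : 1 ≤ k) → k ≤ s + 1 → ∀ a : V, ∀ F : (Fin k → V) → ℝ,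
      (∑ b : Fin s → D, ∑ u ∈ Fintype.piFinset (fun _ : Fin k => U),
          F (fun i => aSeq φ a
              (fun n => bSeq b (fun j => if h : j < k then u ⟨j, h⟩ else 0) n 0) (i : ℕ)))
        / ((Fintype.card (Fin s → D) : ℝ) * (U.card : ℝ) ^ k)
      = (∑ c : Fin k → D,
          F (fun i => aSeq φ a (fun n => if h : n < k then c ⟨n, h⟩ else c ⟨0, by omega⟩) (i : ℕ)))
        / (Fintype.card (Fin k → D) : ℝ) := by
  intro k hk1 hk2 a F
  rcases le_or_gt k s with hks | hks
  · -- easy case: apply hpseudo at k directly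
    rw [← hpseudo k hks (fun v => F (fun i => aSeq φ a
        (fun n => if h : n < k then v ⟨n, h⟩ else v ⟨0, by omega⟩) (i : ℕ)))]
    congr 1
    refine Finset.sum_congr rfl fun b _ => Finset.sum_congr rfl fun u _ => ?_
    congr 1
    funext i
    refine aSeq_congr φ a i fun n hn => ?_
    have hnk : n < k := by have := i.isLt; omega
    simp only [dif_pos hnk]
  · -- k = s + 1
    obtain rfl : k = s + 1 := by omega
    have hs0 : 0 < s := Nat.pos_of_ne_zero (NeZero.ne s)
    set Fc : (Fin s → D) → ℝ := fun v => F (fun i => aSeq φ a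
        (fun n => if h : n < s then v ⟨n, h⟩ else v ⟨0, hs0⟩) (i : ℕ)) with hFc
    have key := hpseudo s le_rfl Fc
    have hUcard : (0:ℝ) < U.card := by exact_mod_cast Finset.card_pos.mpr hU
    have hDcard : (0:ℝ) < Fintype.card D := by exact_mod_cast Fintype.card_pos
    -- left numerator
    have hL : ∀ b : Fin s → D,
        (∑ u ∈ Fintype.piFinset (fun _ : Fin (s+1) => U),
          F (fun i => aSeq φ a
              (fun n => bSeq b (fun j => if h : j < s+1 then u ⟨j, h⟩ else 0) n 0) (i : ℕ)))
        = (U.card : ℝ) * ∑ u ∈ Fintype.piFinset (fun _ : Fin s => U),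
            Fc (fun i => bSeq b (fun j => if h : j < s then u ⟨j, h⟩ else 0) (i : ℕ) 0) := by
      intro b
      rw [sum_piFinset_snoc]
      refine Eq.trans (Finset.sum_congr rfl fun x hx => ?_)
        (by rw [Finset.sum_const, nsmul_eq_mul])
      refine Finset.sum_congr rfl fun u hu => ?_
      rw [hFc]
      congr 1
      funext i
      refine aSeq_congr φ a i fun n hn => ?_
      have hns : n < s := by have := i.isLt; omega
      rw [dif_pos hns]
      show bSeq b _ n 0 = bSeq b _ n 0
      rw [bSeq_congr b n (fun j hj => ?_)]
      have hjs : j < s := by omega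
      rw [dif_pos (show j < s + 1 by omega), dif_pos hjs]
      simp [Fin.snoc, hjs, Fin.castLT]
    -- right numerator
    have hR : (∑ c : Fin (s+1) → D,
          F (fun i => aSeq φ a
            (fun n => if h : n < s + 1 then c ⟨n, h⟩ else c ⟨0, by omega⟩) (i : ℕ)))
        = (Fintype.card D : ℝ) * ∑ v : Fin s → D, Fc v := by
      rw [sum_fun_snoc]
      refine Eq.trans (Finset.sum_congr rfl fun x _ => ?_)
        (by rw [Finset.sum_const, Finset.card_univ, nsmul_eq_mul])
      refine Finset.sum_congr rfl fun v _ => ?_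
      rw [hFc]
      congr 1
      funext i
      refine aSeq_congr φ a i fun n hn => ?_
      have hns : n < s := by have := i.isLt; omega
      rw [dif_pos (show n < s + 1 by omega), dif_pos hns]
      simp [Fin.snoc, hns, Fin.castLT]
    rw [Finset.sum_congr rfl (fun b _ => hL b), ← Finset.mul_sum, hR]
    have hcard : (Fintype.card (Fin (s+1) → D) : ℝ)
        = (Fintype.card D : ℝ) * (Fintype.card (Fin s → D) : ℝ) := by
      simp [Fintype.card_fun, pow_succ, mul_comm]
    rw [hcard, mul_div_mul_left _ _ (ne_of_gt hDcard), ← key, pow_succ]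
    field_simp
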